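/- arXiv:hep-th/0305038 — 2 statements merged into one kernel-verified Lean document; each statement's English description precedes it below -/
import Mathlib

section
/- The rational Dunkl operators D_j = ∂_{x_j} + β ∑_{k≠j} (1/(x_j − x_k))(1 − K_{jk}) pairwise commute: [D_i, D_j] = 0 for all i, j. -/
open Finset

/-- Partial derivative `∂_{x_j}`. -/
noncomputable def pd {N : ℕ} (j : Fin N) (f : (Fin N → ℝ) → ℝ) : (Fin N → ℝ) → ℝ :=
  fun x => deriv (fun t => f (Function.update x j t)) (x j)

/-- The rational Dunkl operator
`D_j = ∂_{x_j} + β ∑_{k≠j} (1/(x_j − x_k))(1 − K_{jk})`. -/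
noncomputable def Dunkl {N : ℕ} (β : ℝ) (j : Fin N) (f : (Fin N → ℝ) → ℝ) :
    (Fin N → ℝ) → ℝ :=
  fun x => pd j f x +
    β * ∑ k ∈ univ.erase j, (f x - f (x ∘ ⇑(Equiv.swap j k))) / (x j - x k)

section Aux

variable {N : ℕ}

/-- First partial of `f` at `y` in direction `a`, via `fderiv`. -/
noncomputable def Pp (f : (Fin N → ℝ) → ℝ) (a : Fin N) (y : Fin N → ℝ) : ℝ :=
  fderiv ℝ f y (Pi.single a 1)

lemma hasDerivAt_update' (x : Fin N → ℝ) (i : Fin N) (t₀ : ℝ) :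
    HasDerivAt (fun t => Function.update x i t) ((Pi.single i 1 : Fin N → ℝ)) t₀ := by
  have h : (fun t : ℝ => Function.update x i t)
      = fun t => x + (t - x i) • (Pi.single i 1 : Fin N → ℝ) := by
    funext t
    funext m
    by_cases h : m = i
    · subst h; simp
    · simp [Function.update_of_ne h, Pi.single_eq_of_ne h]
  rw [h]
  simpa using (((hasDerivAt_id t₀).sub_const (x i)).smul_const ((Pi.single i 1 : Fin N → ℝ))).const_add x

lemma hasDerivAt_comp_update {f : (Fin N → ℝ) → ℝ} {L : (Fin N → ℝ) →L[ℝ] ℝ}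
    {x : Fin N → ℝ} (hf : HasFDerivAt f L x) (i : Fin N) :
    HasDerivAt (fun t => f (Function.update x i t)) (L (Pi.single i 1)) (x i) := by
  have hf' : HasFDerivAt f L (Function.update x i (x i)) := by
    rwa [Function.update_eq_self]
  exact hf'.comp_hasDerivAt (x i) (hasDerivAt_update' x i (x i))

lemma update_comp_swap (x : Fin N → ℝ) (i : Fin N) (t : ℝ) (a b : Fin N) :
    Function.update x i t ∘ ⇑(Equiv.swap a b)
      = Function.update (x ∘ ⇑(Equiv.swap a b)) (Equiv.swap a b i) t := by
  funext m
  simp only [Function.comp_apply, Function.update_apply]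
  by_cases h : m = Equiv.swap a b i
  · subst h; simp [Equiv.swap_apply_self]
  · have h2 : Equiv.swap a b m ≠ i := by
      intro hc
      apply h
      have := congrArg (Equiv.swap a b) hc
      rwa [Equiv.swap_apply_self] at this
    simp [h, h2]

lemma hasDerivAt_comp_update_swap {f : (Fin N → ℝ) → ℝ} {L : (Fin N → ℝ) →L[ℝ] ℝ}
    (x : Fin N → ℝ) (i a b : Fin N)
    (hf : HasFDerivAt f L (x ∘ ⇑(Equiv.swap a b))) :
    HasDerivAt (fun t => f (Function.update x i t ∘ ⇑(Equiv.swap a b)))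
      (L (Pi.single (Equiv.swap a b i) 1)) (x i) := by
  have h1 : ∀ t : ℝ, Function.update x i t ∘ ⇑(Equiv.swap a b)
      = Function.update (x ∘ ⇑(Equiv.swap a b)) (Equiv.swap a b i) t :=
    fun t => update_comp_swap x i t a b
  have h2 : HasDerivAt
      (fun t => f (Function.update (x ∘ ⇑(Equiv.swap a b)) (Equiv.swap a b i) t))
      (L (Pi.single (Equiv.swap a b i) 1)) ((x ∘ ⇑(Equiv.swap a b)) (Equiv.swap a b i)) :=
    hasDerivAt_comp_update hf (Equiv.swap a b i)
  have h3 : (x ∘ ⇑(Equiv.swap a b)) (Equiv.swap a b i) = x i := by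
    simp [Equiv.swap_apply_self]
  rw [h3] at h2
  simpa only [h1] using h2

lemma hasDerivAt_update_coord (x : Fin N → ℝ) (a m : Fin N) :
    HasDerivAt (fun t => Function.update x a t m) (if m = a then (1:ℝ) else 0) (x a) := by
  by_cases h : m = a
  · subst h
    simp only [Function.update_self, if_pos rfl]
    exact hasDerivAt_id _
  · simp only [Function.update_of_ne h, if_neg h]
    exact hasDerivAt_const _ _

/-- The `β¹` summand arising from differentiating the reflection part. -/
noncomputable def Ee (f : (Fin N → ℝ) → ℝ) (x : Fin N → ℝ) (p q l : Fin N) : ℝ :=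
  ((Pp f p x - Pp f (Equiv.swap q l p) (x ∘ ⇑(Equiv.swap q l))) * (x q - x l)
    - (f x - f (x ∘ ⇑(Equiv.swap q l)))
        * ((if q = p then (1:ℝ) else 0) - (if l = p then (1:ℝ) else 0)))
   / (x q - x l) ^ 2

/-- The `β²` summand. -/
noncomputable def Tt (f : (Fin N → ℝ) → ℝ) (x : Fin N → ℝ) (p q k l : Fin N) : ℝ :=
  ((f x - f (x ∘ ⇑(Equiv.swap q l))) / (x q - x l)
    - (f (x ∘ ⇑(Equiv.swap p k)) - f ((x ∘ ⇑(Equiv.swap p k)) ∘ ⇑(Equiv.swap q l)))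
      / ((x ∘ ⇑(Equiv.swap p k)) q - (x ∘ ⇑(Equiv.swap p k)) l)) / (x p - x k)

lemma expand_Dunkl (β : ℝ) (f : (Fin N → ℝ) → ℝ) (hf : ContDiff ℝ (⊤ : ℕ∞) f)
    (x : Fin N → ℝ) (hx : Function.Injective x) (p q : Fin N) :
    Dunkl β p (Dunkl β q f) x
      = fderiv ℝ (fderiv ℝ f) x (Pi.single p 1) (Pi.single q 1)
        + β * ((∑ l ∈ univ.erase q, Ee f x p q l)
             + ∑ k ∈ univ.erase p, (Pp f q x - Pp f q (x ∘ ⇑(Equiv.swap p k))) / (x p - x k))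
        + β ^ 2 * ∑ k ∈ univ.erase p, ∑ l ∈ univ.erase q, Tt f x p q k l := by
  have hdiff := hf.differentiable (by simp)
  have hfd : ∀ y, HasFDerivAt f (fderiv ℝ f y) y := fun y => (hdiff y).hasFDerivAt
  have hf2 : ContDiff ℝ (⊤ : ℕ∞) (fderiv ℝ f) := hf.fderiv_right (by simp)
  have hH : HasFDerivAt (fderiv ℝ f) (fderiv ℝ (fderiv ℝ f) x) x :=
    ((hf2.differentiable (by simp)) x).hasFDerivAt
  have hG : ∀ y, Dunkl β q f y
      = Pp f q y + β * ∑ l ∈ univ.erase q,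
          (f y - f (y ∘ ⇑(Equiv.swap q l))) / (y q - y l) := by
    intro y
    simp only [Dunkl, pd]
    rw [(hasDerivAt_comp_update (hfd y) q).deriv]
    rfl
  -- the derivative part
  have key : HasDerivAt (fun t => Dunkl β q f (Function.update x p t))
      (fderiv ℝ (fderiv ℝ f) x (Pi.single p 1) (Pi.single q 1)
        + β * ∑ l ∈ univ.erase q, Ee f x p q l) (x p) := by
    have hfun : (fun t => Dunkl β q f (Function.update x p t)) = fun t =>
        Pp f q (Function.update x p t) + β * ∑ l ∈ univ.erase q,
          (f (Function.update x p t) - f (Function.update x p t ∘ ⇑(Equiv.swap q l)))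
            / (Function.update x p t q - Function.update x p t l) := by
      funext t; rw [hG]
    rw [hfun]
    have h1 : HasDerivAt (fun t => Pp f q (Function.update x p t))
        (fderiv ℝ (fderiv ℝ f) x (Pi.single p 1) (Pi.single q 1)) (x p) := by
      have hc : HasFDerivAt (fun y => Pp f q y)
          (((ContinuousLinearMap.apply ℝ ℝ ((Pi.single q 1 : Fin N → ℝ)))).comp
            (fderiv ℝ (fderiv ℝ f) x)) x := by
        have := ((ContinuousLinearMap.apply ℝ ℝ
          ((Pi.single q 1 : Fin N → ℝ))).hasFDerivAt).comp x hH
        exact this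
      have h2 := hasDerivAt_comp_update hc p
      simpa [ContinuousLinearMap.comp_apply, ContinuousLinearMap.apply_apply, Pp] using h2
    have h2 : HasDerivAt (fun t => ∑ l ∈ univ.erase q,
        (f (Function.update x p t) - f (Function.update x p t ∘ ⇑(Equiv.swap q l)))
          / (Function.update x p t q - Function.update x p t l))
        (∑ l ∈ univ.erase q, Ee f x p q l) (x p) := by
      apply HasDerivAt.fun_sum
      intro l hl
      have hql : l ≠ q := (Finset.mem_erase.mp hl).1
      have hne : x q - x l ≠ 0 := sub_ne_zero.mpr fun hc => hql (hx hc).symm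
      have hcnum : HasDerivAt
          (fun t => f (Function.update x p t) - f (Function.update x p t ∘ ⇑(Equiv.swap q l)))
          (Pp f p x - Pp f (Equiv.swap q l p) (x ∘ ⇑(Equiv.swap q l))) (x p) :=
        (hasDerivAt_comp_update (hfd x) p).sub (hasDerivAt_comp_update_swap x p q l (hfd _))
      have hcden : HasDerivAt (fun t => Function.update x p t q - Function.update x p t l)
          ((if q = p then (1:ℝ) else 0) - (if l = p then (1:ℝ) else 0)) (x p) :=
        (hasDerivAt_update_coord x p q).sub (hasDerivAt_update_coord x p l)
      have hne' : (Function.update x p (x p) q - Function.update x p (x p) l) ≠ 0 := by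
        rwa [Function.update_eq_self]
      have hdiv := hcnum.div hcden hne'
      simp only [Function.update_eq_self] at hdiv
      exact hdiv
    exact h1.add (h2.const_mul β)
  have hpdG : pd p (Dunkl β q f) x
      = fderiv ℝ (fderiv ℝ f) x (Pi.single p 1) (Pi.single q 1)
        + β * ∑ l ∈ univ.erase q, Ee f x p q l := by
    simp only [pd]
    exact key.deriv
  -- outer assembly
  have hsum : ∀ k ∈ univ.erase p,
      (Dunkl β q f x - Dunkl β q f (x ∘ ⇑(Equiv.swap p k))) / (x p - x k)
      = (Pp f q x - Pp f q (x ∘ ⇑(Equiv.swap p k))) / (x p - x k)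
        + β * ∑ l ∈ univ.erase q, Tt f x p q k l := by
    intro k hk
    rw [hG x, hG (x ∘ ⇑(Equiv.swap p k))]
    have hTt : ∑ l ∈ univ.erase q, Tt f x p q k l
        = ((∑ l ∈ univ.erase q, (f x - f (x ∘ ⇑(Equiv.swap q l))) / (x q - x l))
          - ∑ l ∈ univ.erase q,
            (f (x ∘ ⇑(Equiv.swap p k)) - f ((x ∘ ⇑(Equiv.swap p k)) ∘ ⇑(Equiv.swap q l)))
              / ((x ∘ ⇑(Equiv.swap p k)) q - (x ∘ ⇑(Equiv.swap p k)) l)) / (x p - x k) := by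
      rw [← Finset.sum_sub_distrib, Finset.sum_div]
      rfl
    rw [hTt]
    ring
  rw [show Dunkl β p (Dunkl β q f) x = pd p (Dunkl β q f) x
      + β * ∑ k ∈ univ.erase p,
        (Dunkl β q f x - Dunkl β q f (x ∘ ⇑(Equiv.swap p k))) / (x p - x k) from rfl]
  rw [hpdG, Finset.sum_congr rfl hsum, Finset.sum_add_distrib, ← Finset.mul_sum]
  ring

end Aux

set_option maxHeartbeats 1000000 in
lemma key3 (a b c F1 A B C G1 G2 : ℝ) (h1 : a - b ≠ 0) (h2 : a - c ≠ 0) (h3 : b - c ≠ 0) :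
    ((F1 - C)/(b - c) - (A - G1)/(a - c))/(a - b)
      + ((F1 - A)/(b - a) - (B - G1)/(b - c))/(a - c)
      + ((F1 - C)/(b - c) - (B - G2)/(b - a))/(a - c)
    = ((F1 - B)/(a - c) - (A - G2)/(b - c))/(b - a)
      + ((F1 - A)/(a - b) - (C - G2)/(a - c))/(b - c)
      + ((F1 - B)/(a - c) - (C - G1)/(a - b))/(b - c) := by
  have h1' : b - a ≠ 0 := fun h => h1 (by linarith [sub_eq_zero.mp h])
  field_simp
  ring

section Ident
variable {N : ℕ} (f : (Fin N → ℝ) → ℝ) (x : Fin N → ℝ)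

lemma Ee_generic (hx : Function.Injective x) {i j m : Fin N}
    (hij : i ≠ j) (him : i ≠ m) (hjm : j ≠ m) :
    Ee f x i j m = (Pp f i x - Pp f i (x ∘ ⇑(Equiv.swap j m))) / (x j - x m) := by
  have hne : x j - x m ≠ 0 := sub_ne_zero.mpr fun hc => hjm (hx hc)
  rw [Ee, Equiv.swap_apply_of_ne_of_ne hij him, if_neg hij.symm, if_neg him.symm]
  field_simp
  ring

lemma Ee_boundary (hx : Function.Injective x) {i j : Fin N} (hij : i ≠ j) :
    Ee f x i j i + (Pp f j x - Pp f j (x ∘ ⇑(Equiv.swap i j))) / (x i - x j)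
    = Ee f x j i j + (Pp f i x - Pp f i (x ∘ ⇑(Equiv.swap j i))) / (x j - x i) := by
  have hne : x i - x j ≠ 0 := sub_ne_zero.mpr fun hc => hij (hx hc)
  have hne' : x j - x i ≠ 0 := sub_ne_zero.mpr fun hc => hij (hx hc).symm
  rw [Ee, Ee, Equiv.swap_comm j i, Equiv.swap_apply_left, Equiv.swap_apply_right,
    if_neg hij.symm, if_pos rfl, if_neg hij, if_pos rfl]
  field_simp
  ring

lemma Tt_generic {i j k l : Fin N} (hij : i ≠ j) (hik : i ≠ k)
    (hil : i ≠ l) (hjk : j ≠ k) (hjl : j ≠ l) (hkl : k ≠ l) :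
    Tt f x i j k l = Tt f x j i l k := by
  have hcomm : (x ∘ ⇑(Equiv.swap i k)) ∘ ⇑(Equiv.swap j l)
      = (x ∘ ⇑(Equiv.swap j l)) ∘ ⇑(Equiv.swap i k) := by
    funext t
    simp only [Function.comp_apply, Equiv.swap_apply_def]
    split_ifs <;> simp_all
  rw [Tt, Tt, hcomm]
  simp only [Function.comp_apply,
    Equiv.swap_apply_of_ne_of_ne hil.symm hkl.symm,
    Equiv.swap_apply_of_ne_of_ne hij.symm hjk,
    Equiv.swap_apply_of_ne_of_ne hij hil,
    Equiv.swap_apply_of_ne_of_ne hjk.symm hkl]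
  ring

lemma Tt_boundary (hx : Function.Injective x) {i j : Fin N} (hij : i ≠ j) :
    Tt f x i j j i = Tt f x j i i j := by
  have hne : x i - x j ≠ 0 := sub_ne_zero.mpr fun hc => hij (hx hc)
  have hne' : x j - x i ≠ 0 := sub_ne_zero.mpr fun hc => hij (hx hc).symm
  have hid : (x ∘ ⇑(Equiv.swap i j)) ∘ ⇑(Equiv.swap j i) = x := by
    funext t
    simp only [Function.comp_apply, Equiv.swap_apply_def]
    split_ifs <;> simp_all
  have hid' : (x ∘ ⇑(Equiv.swap j i)) ∘ ⇑(Equiv.swap i j) = x := by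
    funext t
    simp only [Function.comp_apply, Equiv.swap_apply_def]
    split_ifs <;> simp_all
  rw [Tt, Tt, hid, hid']
  simp only [Function.comp_apply, Equiv.swap_apply_left, Equiv.swap_apply_right]
  rw [Equiv.swap_comm j i]
  field_simp
  ring

set_option maxHeartbeats 1000000 in
lemma Tt_perm (hx : Function.Injective x) {i j m : Fin N}
    (hij : i ≠ j) (him : i ≠ m) (hjm : j ≠ m) :
    Tt f x i j j m + Tt f x i j m i + Tt f x i j m m
    = Tt f x j i i m + Tt f x j i m j + Tt f x j i m m := by
  have hne1 : x i - x j ≠ 0 := sub_ne_zero.mpr fun hc => hij (hx hc)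
  have hne2 : x i - x m ≠ 0 := sub_ne_zero.mpr fun hc => him (hx hc)
  have hne3 : x j - x m ≠ 0 := sub_ne_zero.mpr fun hc => hjm (hx hc)
  -- canonical composite points
  have hc1a : (x ∘ ⇑(Equiv.swap i m)) ∘ ⇑(Equiv.swap j i)
      = (x ∘ ⇑(Equiv.swap i j)) ∘ ⇑(Equiv.swap j m) := by
    funext t
    simp only [Function.comp_apply, Equiv.swap_apply_def]
    split_ifs <;> simp_all
  have hc1b : (x ∘ ⇑(Equiv.swap j m)) ∘ ⇑(Equiv.swap i m)
      = (x ∘ ⇑(Equiv.swap i j)) ∘ ⇑(Equiv.swap j m) := by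
    funext t
    simp only [Function.comp_apply, Equiv.swap_apply_def]
    split_ifs <;> simp_all
  have hc2a : (x ∘ ⇑(Equiv.swap j i)) ∘ ⇑(Equiv.swap i m)
      = (x ∘ ⇑(Equiv.swap i m)) ∘ ⇑(Equiv.swap j m) := by
    funext t
    simp only [Function.comp_apply, Equiv.swap_apply_def]
    split_ifs <;> simp_all
  have hc2b : (x ∘ ⇑(Equiv.swap j m)) ∘ ⇑(Equiv.swap i j)
      = (x ∘ ⇑(Equiv.swap i m)) ∘ ⇑(Equiv.swap j m) := by
    funext t
    simp only [Function.comp_apply, Equiv.swap_apply_def]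
    split_ifs <;> simp_all
  simp only [Tt, hc1a, hc1b, hc2a, hc2b, Function.comp_apply]
  rw [Equiv.swap_comm j i]
  simp only [Equiv.swap_apply_left, Equiv.swap_apply_right,
    Equiv.swap_apply_of_ne_of_ne him.symm hjm.symm,
    Equiv.swap_apply_of_ne_of_ne hij.symm hjm,
    Equiv.swap_apply_of_ne_of_ne hij him,
    Equiv.swap_apply_of_ne_of_ne hjm.symm him.symm]
  exact key3 (x i) (x j) (x m) (f x) (f (x ∘ ⇑(Equiv.swap i j))) (f (x ∘ ⇑(Equiv.swap i m)))
    (f (x ∘ ⇑(Equiv.swap j m))) (f ((x ∘ ⇑(Equiv.swap i j)) ∘ ⇑(Equiv.swap j m)))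
    (f ((x ∘ ⇑(Equiv.swap i m)) ∘ ⇑(Equiv.swap j m))) hne1 hne2 hne3

end Ident


section Symm
variable {N : ℕ} (f : (Fin N → ℝ) → ℝ) (x : Fin N → ℝ)

lemma S1_symm (hx : Function.Injective x) {i j : Fin N} (hij : i ≠ j) :
    (∑ l ∈ univ.erase j, Ee f x i j l)
      + ∑ k ∈ univ.erase i, (Pp f j x - Pp f j (x ∘ ⇑(Equiv.swap i k))) / (x i - x k)
    = (∑ l ∈ univ.erase i, Ee f x j i l)
      + ∑ k ∈ univ.erase j, (Pp f i x - Pp f i (x ∘ ⇑(Equiv.swap j k))) / (x j - x k) := by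
  have hi : i ∈ (univ : Finset (Fin N)).erase j := Finset.mem_erase.mpr ⟨hij, mem_univ i⟩
  have hj : j ∈ (univ : Finset (Fin N)).erase i := Finset.mem_erase.mpr ⟨hij.symm, mem_univ j⟩
  have hsk : ((univ : Finset (Fin N)).erase i).erase j
      = ((univ : Finset (Fin N)).erase j).erase i := Finset.erase_right_comm
  have hmem : ∀ m ∈ ((univ : Finset (Fin N)).erase j).erase i, m ≠ i ∧ m ≠ j := fun m hm =>
    ⟨(Finset.mem_erase.mp hm).1, (Finset.mem_erase.mp (Finset.mem_erase.mp hm).2).1⟩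
  rw [← Finset.add_sum_erase _ (fun l => Ee f x i j l) hi,
      ← Finset.add_sum_erase _ (fun k => (Pp f j x - Pp f j (x ∘ ⇑(Equiv.swap i k))) / (x i - x k)) hj,
      ← Finset.add_sum_erase _ (fun l => Ee f x j i l) hj,
      ← Finset.add_sum_erase _ (fun k => (Pp f i x - Pp f i (x ∘ ⇑(Equiv.swap j k))) / (x j - x k)) hi,
      hsk]
  have hEe1 : ∀ m ∈ ((univ : Finset (Fin N)).erase j).erase i,
      Ee f x i j m = (Pp f i x - Pp f i (x ∘ ⇑(Equiv.swap j m))) / (x j - x m) := by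
    intro m hm
    obtain ⟨hmi, hmj⟩ := hmem m hm
    exact Ee_generic f x hx hij (Ne.symm hmi) (Ne.symm hmj)
  have hEe2 : ∀ m ∈ ((univ : Finset (Fin N)).erase j).erase i,
      Ee f x j i m = (Pp f j x - Pp f j (x ∘ ⇑(Equiv.swap i m))) / (x i - x m) := by
    intro m hm
    obtain ⟨hmi, hmj⟩ := hmem m hm
    exact Ee_generic f x hx hij.symm (Ne.symm hmj) (Ne.symm hmi)
  rw [Finset.sum_congr rfl hEe1, Finset.sum_congr rfl hEe2]
  have hbd := Ee_boundary f x hx hij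
  linarith [hbd]

lemma S2_symm (hx : Function.Injective x) {i j : Fin N} (hij : i ≠ j) :
    ∑ k ∈ univ.erase i, ∑ l ∈ univ.erase j, Tt f x i j k l
    = ∑ k ∈ univ.erase j, ∑ l ∈ univ.erase i, Tt f x j i k l := by
  have hi : i ∈ (univ : Finset (Fin N)).erase j := Finset.mem_erase.mpr ⟨hij, mem_univ i⟩
  have hj : j ∈ (univ : Finset (Fin N)).erase i := Finset.mem_erase.mpr ⟨hij.symm, mem_univ j⟩
  have hsk : ((univ : Finset (Fin N)).erase i).erase j
      = ((univ : Finset (Fin N)).erase j).erase i := Finset.erase_right_comm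
  have hmem : ∀ m ∈ ((univ : Finset (Fin N)).erase j).erase i, m ≠ i ∧ m ≠ j := fun m hm =>
    ⟨(Finset.mem_erase.mp hm).1, (Finset.mem_erase.mp (Finset.mem_erase.mp hm).2).1⟩
  -- split LHS
  rw [← Finset.add_sum_erase _ (fun k => ∑ l ∈ univ.erase j, Tt f x i j k l) hj, hsk,
      ← Finset.add_sum_erase _ (fun l => Tt f x i j j l) hi]
  have hsplit : ∀ k ∈ ((univ : Finset (Fin N)).erase j).erase i,
      ∑ l ∈ univ.erase j, Tt f x i j k l
        = Tt f x i j k i + ∑ l ∈ (univ.erase j).erase i, Tt f x i j k l :=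
    fun k _ => (Finset.add_sum_erase _ _ hi).symm
  rw [Finset.sum_congr rfl hsplit, Finset.sum_add_distrib]
  -- split RHS
  rw [← Finset.add_sum_erase _ (fun k => ∑ l ∈ univ.erase i, Tt f x j i k l) hi,
      ← Finset.add_sum_erase _ (fun l => Tt f x j i i l) hj, hsk]
  have hsplit' : ∀ k ∈ ((univ : Finset (Fin N)).erase j).erase i,
      ∑ l ∈ univ.erase i, Tt f x j i k l
        = Tt f x j i k j + ∑ l ∈ ((univ : Finset (Fin N)).erase j).erase i, Tt f x j i k l := by
    intro k _
    rw [← Finset.add_sum_erase _ (fun l => Tt f x j i k l) hj, hsk]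
  rw [Finset.sum_congr rfl hsplit', Finset.sum_add_distrib]
  -- double sum symmetry up to diagonal
  have hdd : ∑ k ∈ ((univ : Finset (Fin N)).erase j).erase i,
        ∑ l ∈ ((univ : Finset (Fin N)).erase j).erase i, Tt f x i j k l
      = (∑ k ∈ ((univ : Finset (Fin N)).erase j).erase i,
          ∑ l ∈ ((univ : Finset (Fin N)).erase j).erase i, Tt f x j i k l)
        + (∑ m ∈ ((univ : Finset (Fin N)).erase j).erase i, Tt f x i j m m
          - ∑ m ∈ ((univ : Finset (Fin N)).erase j).erase i, Tt f x j i m m) := by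
    have h1 : ∑ k ∈ ((univ : Finset (Fin N)).erase j).erase i,
        ∑ l ∈ ((univ : Finset (Fin N)).erase j).erase i, Tt f x j i k l
        = ∑ k ∈ ((univ : Finset (Fin N)).erase j).erase i,
          ∑ l ∈ ((univ : Finset (Fin N)).erase j).erase i, Tt f x j i l k :=
      Finset.sum_comm
    have h2 : ∑ k ∈ ((univ : Finset (Fin N)).erase j).erase i,
        (∑ l ∈ ((univ : Finset (Fin N)).erase j).erase i,
          (Tt f x i j k l - Tt f x j i l k))
        = ∑ m ∈ ((univ : Finset (Fin N)).erase j).erase i,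
            (Tt f x i j m m - Tt f x j i m m) := by
      apply Finset.sum_congr rfl
      intro k hk
      refine Finset.sum_eq_single_of_mem k hk ?_
      intro l hl hlk
      obtain ⟨hki, hkj⟩ := hmem k hk
      obtain ⟨hli, hlj⟩ := hmem l hl
      rw [Tt_generic f x hij (Ne.symm hki) (Ne.symm hli) (Ne.symm hkj) (Ne.symm hlj) hlk.symm,
        sub_self]
    simp only [Finset.sum_sub_distrib] at h2
    linarith [h1, h2]
  -- per-m identity summed
  have hperm : ∑ m ∈ ((univ : Finset (Fin N)).erase j).erase i,
      (Tt f x i j j m + Tt f x i j m i + Tt f x i j m m)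
      = ∑ m ∈ ((univ : Finset (Fin N)).erase j).erase i,
        (Tt f x j i i m + Tt f x j i m j + Tt f x j i m m) := by
    apply Finset.sum_congr rfl
    intro m hm
    obtain ⟨hmi, hmj⟩ := hmem m hm
    exact Tt_perm f x hx hij (Ne.symm hmi) (Ne.symm hmj)
  simp only [Finset.sum_add_distrib] at hperm
  have hbd := Tt_boundary f x hx hij
  linarith [hdd, hperm, hbd]

end Symm


/-- the rational Dunkl operators pairwise commute: `[D_i, D_j] = 0`
(on smooth functions, away from the diagonals `x_i = x_j`). -/
theorem dunkl_commute {N : ℕ} (β : ℝ) (f : (Fin N → ℝ) → ℝ)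
    (hf : ContDiff ℝ (⊤ : ℕ∞) f) (i j : Fin N) (x : Fin N → ℝ)
    (hx : Function.Injective x) :
    Dunkl β i (Dunkl β j f) x = Dunkl β j (Dunkl β i f) x := by
  rcases eq_or_ne i j with rfl | hij
  · rfl
  · rw [expand_Dunkl β f hf x hx i j, expand_Dunkl β f hf x hx j i]
    have hfd : ∀ y, HasFDerivAt f (fderiv ℝ f y) y :=
      fun y => ((hf.differentiable (by simp)) y).hasFDerivAt
    have hH : HasFDerivAt (fderiv ℝ f) (fderiv ℝ (fderiv ℝ f) x) x :=
      (((hf.fderiv_right (m := (⊤ : ℕ∞)) (by simp)).differentiable (by simp)) x).hasFDerivAt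
    rw [second_derivative_symmetric hfd hH (Pi.single i 1) (Pi.single j 1),
        S1_symm f x hx hij, S2_symm f x hx hij]
end

section
/- If an operator A satisfies [Δ, A] = 2D² where D commutes with Δ and with D² commuting with A appropriately — specifically for A = 𝒟_j with [Δ, 𝒟_j] = 2D_j² and [D_j², Δ] = 0 — then conjugation gives e^{−Δ/(4ω)} 𝒟_j e^{Δ/(4ω)} = 𝒟_j − (1/(2ω)) D_j² = 𝒟_j^ω (the Baker–Campbell–Hausdorff series terminates after the first commutator). -/
open NormedSpace

/-! With `c = [B, X]` commuting with `X`, the curve `F t = exp (-t X) B exp (t X)` has derivative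
`exp (-t X) c exp (t X) = c`, so `F t = B + t c`. For `X = Δ`, `B = 𝒟` one has `c = -2 D²`,
which commutes with `Δ`, and `t = 1 / (4ω)` gives the claim. -/

section ConjugationByExp

variable {𝕂 𝔸 : Type*} [RCLike 𝕂] [NormedRing 𝔸] [NormedAlgebra 𝕂 𝔸] [CompleteSpace 𝔸]

theorem hasDerivAt_exp_neg_smul_mul_mul_exp_smul (X B : 𝔸) (t : 𝕂) :
    HasDerivAt (fun u : 𝕂 => exp (-(u • X)) * B * exp (u • X))
      (exp (-(t • X)) * (B * X - X * B) * exp (t • X)) t := by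
  have hneg : HasDerivAt (fun u : 𝕂 => exp (-(u • X))) (exp (-(t • X)) * -X) t := by
    simpa only [smul_neg] using hasDerivAt_exp_smul_const (-X) t
  convert (hneg.mul_const B).fun_mul (hasDerivAt_exp_smul_const' X t) using 1
  noncomm_ring

theorem exp_neg_smul_mul_mul_exp_smul_of_commute {X B : 𝔸} (hX : Commute X (B * X - X * B))
    (t : 𝕂) :
    exp (-(t • X)) * B * exp (t • X) = B + t • (B * X - X * B) := by
  have hF : ∀ u : 𝕂, HasDerivAt
      (fun u => exp (-(u • X)) * B * exp (u • X) - u • (B * X - X * B)) 0 u := fun u => by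
    have hconj : exp (-(u • X)) * (B * X - X * B) * exp (u • X) = B * X - X * B := by
      -- the library states this for `ℚ`-algebras, the base field of `exp`
      let := NormedAlgebra.restrictScalars ℚ 𝕂 𝔸
      exact (hX.smul_left u).symm.exp_neg_mul_mul_exp_eq_self
    simpa [hconj] using (hasDerivAt_exp_neg_smul_mul_mul_exp_smul X B u).fun_sub
      ((hasDerivAt_id u).smul_const (B * X - X * B))
  simpa [sub_eq_iff_eq_add] using
    is_const_of_deriv_eq_zero (fun u => (hF u).differentiableAt) (fun u => (hF u).deriv) t 0

end ConjugationByExp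

theorem conj_exp_delta_cherednik_general {A : Type*} [NormedRing A] [NormedAlgebra ℝ A]
    [CompleteSpace A] (ω : ℝ) (Δ 𝒟 D : A)
    (h1 : Δ * 𝒟 - 𝒟 * Δ = 2 * D ^ 2)
    (h2 : Δ * D = D * Δ) :
    exp ((-(1 / (4 * ω))) • Δ) * 𝒟 * exp ((1 / (4 * ω)) • Δ)
      = 𝒟 - (1 / (2 * ω)) • D ^ 2 := by
  have hcomm : 𝒟 * Δ - Δ * 𝒟 = -(2 * D ^ 2) := by rw [← h1, neg_sub]
  have hΔ : Commute Δ (𝒟 * Δ - Δ * 𝒟) := by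
    rw [hcomm]
    exact ((Commute.ofNat_right Δ 2).mul_right (Commute.pow_right h2 2)).neg_right
  rw [neg_smul, exp_neg_smul_mul_mul_exp_smul_of_commute hΔ, hcomm, smul_neg, ← sub_eq_add_neg,
    two_mul, ← two_smul ℝ, smul_smul]
  congr 2
  ring

/-- if `[Δ, 𝒟] = 2D²` with `D²` commuting with `Δ` (as holds for the
Cherednik operator `𝒟 = 𝒟_j`, the rational Dunkl operator `D = D_j` and `Δ = ∑_k D_k²`),
then the Baker–Campbell–Hausdorff series for conjugation terminates after the first
commutator: `e^{−Δ/(4ω)} 𝒟 e^{Δ/(4ω)} = 𝒟 − D²/(2ω) = 𝒟^ω`. -/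
theorem conj_exp_delta_cherednik {A : Type*} [NormedRing A] [NormedAlgebra ℝ A]
    [CompleteSpace A] (ω : ℝ) (hω : ω ≠ 0) (Δ 𝒟 D : A)
    (h1 : Δ * 𝒟 - 𝒟 * Δ = 2 * D ^ 2)
    (h2 : Δ * D = D * Δ) :
    exp ((-(1 / (4 * ω))) • Δ) * 𝒟 * exp ((1 / (4 * ω)) • Δ)
      = 𝒟 - (1 / (2 * ω)) • D ^ 2 :=
  conj_exp_delta_cherednik_general ω Δ 𝒟 D h1 h2
end
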